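/- Commutator estimate: for |I| = k ≥ 2, ‖[Z^I, f] g(t)‖_{L²(Ω)} ≲ ‖Zf(t)‖_{H^{k−1}_co} · |||g|||_{[k/2]−1,∞,t} + ‖g(t)‖_{H^{k−1}_co} · |||Zf|||_{[(k−1)/2],∞,t}, where [Z^I, f]g = Z^I(fg) − f Z^I g. -/

import Mathlib

/-!
By the Leibniz rule, `Z^I (f g) - f Z^I g = Σ Z^J f · Z^{I \ J} g` over the `2^k - 1` subwords
`J ≠ ∅` of `I`. Writing `Z^J f = Z^{J'} (Z_j f)`, the two factors carry `|J'| + |I \ J| = k - 1`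
derivatives, so one of them carries few: if `|I \ J| < ⌊k/2⌋` put `Z^{I \ J} g` in `L^∞` and
`Z^{J'} (Z_j f)` in `L²`; otherwise `|J'| ≤ ⌊(k-1)/2⌋` and the roles are exchanged.
-/

open MeasureTheory Set

/-- Composition `Z^w = Z_{w 0} ∘ ⋯ ∘ Z_{w (n-1)}` of abstract first-order derivations
acting on space-time functions, along a word `w`. -/
def Zw {M : ℕ} (Z : Fin M → ((ℝ × (Fin 3 → ℝ)) → ℝ) → ((ℝ × (Fin 3 → ℝ)) → ℝ))
    {n : ℕ} (w : Fin n → Fin M) (f : (ℝ × (Fin 3 → ℝ)) → ℝ) : (ℝ × (Fin 3 → ℝ)) → ℝ :=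
  (List.ofFn w).foldr (fun k h => Z k h) f

/-- Conormal Sobolev norm `‖f(t)‖_{H^m_co} = Σ_{|J|≤m} ‖Z^J f(t)‖_{L²(Ω)}`. -/
noncomputable def HN {M : ℕ}
    (Z : Fin M → ((ℝ × (Fin 3 → ℝ)) → ℝ) → ((ℝ × (Fin 3 → ℝ)) → ℝ))
    (Ω : Set (Fin 3 → ℝ)) (m : ℕ) (f : (ℝ × (Fin 3 → ℝ)) → ℝ) (t : ℝ) : ENNReal :=
  ∑ n ∈ Finset.range (m + 1), ∑ w : Fin n → Fin M,
    eLpNorm (fun x : Fin 3 → ℝ => Zw Z w f (t, x)) 2 (volume.restrict Ω)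

/-- Conormal `L^∞` norm `|||f|||_{m,∞,t} = Σ_{|J|≤m} ‖Z^J f‖_{L^∞([0,t]×Ω)}`. -/
noncomputable def AN {M : ℕ}
    (Z : Fin M → ((ℝ × (Fin 3 → ℝ)) → ℝ) → ((ℝ × (Fin 3 → ℝ)) → ℝ))
    (Ω : Set (Fin 3 → ℝ)) (m : ℕ) (f : (ℝ × (Fin 3 → ℝ)) → ℝ) (t : ℝ) : ENNReal :=
  ∑ n ∈ Finset.range (m + 1), ∑ w : Fin n → Fin M,
    ⨆ (s : ℝ) (_ : s ∈ Set.Icc (0 : ℝ) t) (x : Fin 3 → ℝ) (_ : x ∈ Ω),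
      (‖Zw Z w f (s, x)‖₊ : ENNReal)

section Leibniz

variable {ι α R : Type*} (Z : ι → (α → R) → (α → R))

def iterDeriv (l : List ι) (f : α → R) : α → R := l.foldr Z f

@[simp]
lemma iterDeriv_nil (f : α → R) : iterDeriv Z [] f = f := rfl

@[simp]
lemma iterDeriv_cons (a : ι) (l : List ι) (f : α → R) :
    iterDeriv Z (a :: l) f = Z a (iterDeriv Z l f) := rfl

lemma iterDeriv_append (l₁ l₂ : List ι) (f : α → R) :
    iterDeriv Z (l₁ ++ l₂) f = iterDeriv Z l₁ (iterDeriv Z l₂ f) := by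
  simp only [iterDeriv, List.foldr_append]

lemma iterDeriv_concat (l : List ι) (a : ι) (f : α → R) :
    iterDeriv Z (l.concat a) f = iterDeriv Z l (Z a f) := by
  rw [List.concat_eq_append, iterDeriv_append, iterDeriv_cons, iterDeriv_nil]

/-- The splittings `(J, I \ J)` of a word `I` into complementary subwords with `J ≠ ∅`, listed
with multiplicity: the terms of `[Z^I, f] g = Σ Z^J f · Z^{I \ J} g`. -/
def nonemptySplits : List ι → List (List ι × List ι)
  | [] => []
  | a :: l => ([a], l) :: ((nonemptySplits l).map (fun q => (q.1, a :: q.2)) ++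
      (nonemptySplits l).map (fun q => (a :: q.1, q.2)))

lemma fst_ne_nil_and_length_add_length_of_mem_nonemptySplits {l : List ι}
    {q : List ι × List ι} (hq : q ∈ nonemptySplits l) :
    q.1 ≠ [] ∧ q.1.length + q.2.length = l.length := by
  induction l generalizing q with
  | nil => simp [nonemptySplits] at hq
  | cons a l ih =>
    simp only [nonemptySplits, List.mem_cons, List.mem_append, List.mem_map] at hq
    rcases hq with rfl | ⟨⟨r, hr, rfl⟩ | ⟨r, hr, rfl⟩⟩
    · simp [Nat.add_comm]
    · obtain ⟨hne, hlen⟩ := ih hr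
      exact ⟨hne, by simp [← hlen]; omega⟩
    · obtain ⟨-, hlen⟩ := ih hr
      exact ⟨by simp, by simp [← hlen]; omega⟩

lemma length_nonemptySplits (l : List ι) : (nonemptySplits l).length = 2 ^ l.length - 1 := by
  induction l with
  | nil => rfl
  | cons a l ih =>
    have := Nat.one_le_two_pow (n := l.length)
    simp only [nonemptySplits, List.length_cons, List.length_append, List.length_map, ih,
      pow_succ]
    omega

lemma iterDeriv_mul [CommRing R] (hAdd : ∀ i f g, Z i (f + g) = Z i f + Z i g)
    (hLeib : ∀ i f g, Z i (f * g) = f * Z i g + g * Z i f) (f g : α → R) (l : List ι) :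
    iterDeriv Z l (f * g) = f * iterDeriv Z l g +
      ((nonemptySplits l).map fun q => iterDeriv Z q.1 f * iterDeriv Z q.2 g).sum := by
  induction l with
  | nil => simp [iterDeriv, nonemptySplits]
  | cons a l ih =>
    let Za : (α → R) →+ (α → R) := AddMonoidHom.mk' (Z a) (hAdd a)
    have hterm (q : List ι × List ι) :
        Z a (iterDeriv Z q.1 f * iterDeriv Z q.2 g) =
          iterDeriv Z q.1 f * iterDeriv Z (a :: q.2) g +
            iterDeriv Z (a :: q.1) f * iterDeriv Z q.2 g := by
      rw [hLeib, iterDeriv_cons, iterDeriv_cons]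
      ring
    rw [iterDeriv_cons, iterDeriv_cons, ih, hAdd, hLeib,
      show Z a (List.sum _) = Za (List.sum _) from rfl, map_list_sum]
    simp only [Za, AddMonoidHom.mk'_apply, List.map_map, Function.comp_def, hterm,
      List.sum_map_add, nonemptySplits, List.map_cons, List.sum_cons, List.map_append,
      List.sum_append, iterDeriv_cons, iterDeriv_nil]
    ring

lemma iterDeriv_mul_sub_mul_iterDeriv [CommRing R] (hAdd : ∀ i f g, Z i (f + g) = Z i f + Z i g)
    (hLeib : ∀ i f g, Z i (f * g) = f * Z i g + g * Z i f) (f g : α → R) (l : List ι) :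
    iterDeriv Z l (f * g) - f * iterDeriv Z l g =
      ((nonemptySplits l).map fun q => iterDeriv Z q.1 f * iterDeriv Z q.2 g).sum :=
  sub_eq_of_eq_add' (iterDeriv_mul Z hAdd hLeib f g l)

end Leibniz

section Estimates

variable {α : Type*} [MeasurableSpace α]

lemma measurable_iterDeriv {ι R : Type*} [MeasurableSpace R]
    {Z : ι → (α → R) → (α → R)} (hMeas : ∀ i f, Measurable f → Measurable (Z i f))
    (l : List ι) {f : α → R} (hf : Measurable f) : Measurable (iterDeriv Z l f) := by
  induction l with
  | nil => exact hf
  | cons a l ih => exact hMeas a _ ih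

lemma eLpNorm_list_sum_le {E : Type*} [NormedAddCommGroup E] {μ : Measure α} {p : ENNReal}
    (hp : 1 ≤ p) (L : List (α → E)) (hL : ∀ u ∈ L, AEStronglyMeasurable u μ) :
    eLpNorm L.sum p μ ≤ (L.map fun u => eLpNorm u p μ).sum := by
  induction L with
  | nil => simp
  | cons u L ih =>
    rw [List.forall_mem_cons] at hL
    rw [List.sum_cons, List.map_cons, List.sum_cons]
    exact (eLpNorm_add_le hL.1 (List.aestronglyMeasurable_sum _ hL.2) hp).trans
      (add_le_add_right (ih hL.2) _)

lemma eLpNorm_mul_le_of_forall_mem_enorm_le {𝕜 : Type*} [NormedDivisionRing 𝕜]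
    [MeasurableSpace 𝕜] [OpensMeasurableSpace 𝕜] {μ : Measure α} {S : Set α} {A B : α → 𝕜}
    {a : ENNReal} (p : ENNReal) (hA : Measurable A) (hB : AEStronglyMeasurable B (μ.restrict S))
    (hAS : ∀ x ∈ S, ‖A x‖ₑ ≤ a) :
    eLpNorm (A * B) p (μ.restrict S) ≤ a * eLpNorm B p (μ.restrict S) := by
  refine eLpNorm_le_mul_eLpNorm_of_ae_le_mul'' p hB ?_
  have hAa : ∀ᵐ x ∂μ.restrict S, ‖A x‖ₑ ≤ a :=
    (ae_restrict_iff (measurableSet_le hA.enorm measurable_const)).2 (ae_of_all _ hAS)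
  filter_upwards [hAa] with x hx
  rw [Pi.mul_apply, enorm_mul]
  exact mul_le_mul_left hx _

end Estimates

section Conormal

variable {M : ℕ} (Z : Fin M → ((ℝ × (Fin 3 → ℝ)) → ℝ) → ((ℝ × (Fin 3 → ℝ)) → ℝ))
  (Ω : Set (Fin 3 → ℝ))

lemma Zw_eq_iterDeriv {n : ℕ} (w : Fin n → Fin M) (f : (ℝ × (Fin 3 → ℝ)) → ℝ) :
    Zw Z w f = iterDeriv Z (List.ofFn w) f := rfl

lemma iterDeriv_eq_Zw_get (l : List (Fin M)) (f : (ℝ × (Fin 3 → ℝ)) → ℝ) :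
    iterDeriv Z l f = Zw Z l.get f := by
  rw [Zw_eq_iterDeriv, List.ofFn_get]

lemma le_sum_range_sum_words (F : (n : ℕ) → (Fin n → Fin M) → ENNReal) {m : ℕ}
    {l : List (Fin M)} (hl : l.length ≤ m) :
    F l.length l.get ≤ ∑ n ∈ Finset.range (m + 1), ∑ w : Fin n → Fin M, F n w :=
  (Finset.single_le_sum (f := F l.length) (fun _ _ => zero_le) (Finset.mem_univ l.get)).trans
    (Finset.single_le_sum (f := fun n => ∑ w : Fin n → Fin M, F n w) (fun _ _ => zero_le)
      (Finset.mem_range.2 (Nat.lt_succ_of_le hl)))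

lemma eLpNorm_iterDeriv_le_HN {m : ℕ} {l : List (Fin M)} (hl : l.length ≤ m)
    (f : (ℝ × (Fin 3 → ℝ)) → ℝ) (t : ℝ) :
    eLpNorm (fun x => iterDeriv Z l f (t, x)) 2 (volume.restrict Ω) ≤ HN Z Ω m f t := by
  rw [iterDeriv_eq_Zw_get]
  exact le_sum_range_sum_words
    (fun n w => eLpNorm (fun x => Zw Z w f (t, x)) 2 (volume.restrict Ω)) hl

lemma enorm_iterDeriv_le_AN {m : ℕ} {l : List (Fin M)} (hl : l.length ≤ m)
    (f : (ℝ × (Fin 3 → ℝ)) → ℝ) {t : ℝ} (ht : 0 ≤ t) {x : Fin 3 → ℝ} (hx : x ∈ Ω) :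
    ‖iterDeriv Z l f (t, x)‖ₑ ≤ AN Z Ω m f t := by
  rw [iterDeriv_eq_Zw_get]
  refine le_trans ?_ (le_sum_range_sum_words (fun n w =>
    ⨆ (s : ℝ) (_ : s ∈ Set.Icc (0 : ℝ) t) (y : Fin 3 → ℝ) (_ : y ∈ Ω),
      (‖Zw Z w f (s, y)‖₊ : ENNReal)) hl)
  exact le_iSup₂_of_le t ⟨ht, le_rfl⟩ (le_iSup₂_of_le x hx le_rfl)

noncomputable def commutatorBound (k : ℕ) (f g : (ℝ × (Fin 3 → ℝ)) → ℝ) (t : ℝ) : ENNReal :=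
  (∑ j : Fin M, HN Z Ω (k - 1) (Z j f) t) * AN Z Ω (k / 2 - 1) g t
    + HN Z Ω (k - 1) g t * (∑ j : Fin M, AN Z Ω ((k - 1) / 2) (Z j f) t)

lemma eLpNorm_iterDeriv_mul_iterDeriv_le_commutatorBound
    (hMeas : ∀ i f, Measurable f → Measurable (Z i f)) {f g : (ℝ × (Fin 3 → ℝ)) → ℝ}
    (hf : Measurable f) (hg : Measurable g) {t : ℝ} (ht : 0 ≤ t) {k : ℕ} {J K : List (Fin M)}
    (hJ : J ≠ []) (hJK : J.length + K.length = k) :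
    eLpNorm (fun x => iterDeriv Z J f (t, x) * iterDeriv Z K g (t, x)) 2 (volume.restrict Ω)
      ≤ commutatorBound Z Ω k f g t := by
  obtain ⟨J', j, rfl⟩ := (List.eq_nil_or_concat J).resolve_left hJ
  have hJ' : J'.length + 1 + K.length = k := by simpa using hJK
  have hslice {h : (ℝ × (Fin 3 → ℝ)) → ℝ} (hh : Measurable h) (l : List (Fin M)) :
      AEStronglyMeasurable (fun x => iterDeriv Z l h (t, x)) (volume.restrict Ω) :=
    ((measurable_iterDeriv hMeas l hh).comp measurable_prodMk_left).aestronglyMeasurable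
  rw [iterDeriv_concat]
  by_cases hK : K.length ≤ k / 2 - 1
  · conv_lhs => enter [1, x]; rw [mul_comm]
    calc _ ≤ AN Z Ω (k / 2 - 1) g t * HN Z Ω (k - 1) (Z j f) t :=
          (eLpNorm_mul_le_of_forall_mem_enorm_le 2
            ((measurable_iterDeriv hMeas K hg).comp measurable_prodMk_left)
            (hslice (hMeas j f hf) J')
            fun x hx => enorm_iterDeriv_le_AN Z Ω hK g ht hx).trans
          (mul_le_mul_right (eLpNorm_iterDeriv_le_HN Z Ω (by omega) _ t) _)
      _ ≤ (∑ i : Fin M, HN Z Ω (k - 1) (Z i f) t) * AN Z Ω (k / 2 - 1) g t := by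
          rw [mul_comm]
          exact mul_le_mul_left (Finset.single_le_sum (f := fun i => HN Z Ω (k - 1) (Z i f) t)
            (fun _ _ => zero_le) (Finset.mem_univ j)) _
      _ ≤ commutatorBound Z Ω k f g t := le_self_add
  · calc _ ≤ AN Z Ω ((k - 1) / 2) (Z j f) t * HN Z Ω (k - 1) g t :=
          (eLpNorm_mul_le_of_forall_mem_enorm_le 2
            ((measurable_iterDeriv hMeas J' (hMeas j f hf)).comp measurable_prodMk_left)
            (hslice hg K)
            fun x hx => enorm_iterDeriv_le_AN Z Ω (by omega) (Z j f) ht hx).trans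
          (mul_le_mul_right (eLpNorm_iterDeriv_le_HN Z Ω (by omega) g t) _)
      _ ≤ HN Z Ω (k - 1) g t * (∑ i : Fin M, AN Z Ω ((k - 1) / 2) (Z i f) t) := by
          rw [mul_comm]
          exact mul_le_mul_right (Finset.single_le_sum
            (f := fun i => AN Z Ω ((k - 1) / 2) (Z i f) t) (fun _ _ => zero_le)
            (Finset.mem_univ j)) _
      _ ≤ commutatorBound Z Ω k f g t := le_add_self

lemma eLpNorm_commutator_le (hAdd : ∀ i f g, Z i (f + g) = Z i f + Z i g)
    (hLeib : ∀ i f g, Z i (f * g) = f * Z i g + g * Z i f)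
    (hMeas : ∀ i f, Measurable f → Measurable (Z i f)) {f g : (ℝ × (Fin 3 → ℝ)) → ℝ}
    (hf : Measurable f) (hg : Measurable g) {t : ℝ} (ht : 0 ≤ t) (l : List (Fin M)) :
    eLpNorm (fun x => iterDeriv Z l (f * g) (t, x) - f (t, x) * iterDeriv Z l g (t, x)) 2
        (volume.restrict Ω)
      ≤ (2 ^ l.length - 1 : ℕ) * commutatorBound Z Ω l.length f g t := by
  let term (q : List (Fin M) × List (Fin M)) (x : Fin 3 → ℝ) : ℝ :=
    iterDeriv Z q.1 f (t, x) * iterDeriv Z q.2 g (t, x)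
  have hcomm : (fun x => iterDeriv Z l (f * g) (t, x) - f (t, x) * iterDeriv Z l g (t, x)) =
      ((nonemptySplits l).map term).sum := by
    funext x
    simpa only [Pi.sub_apply, Pi.mul_apply, Pi.list_sum_apply, List.map_map, Function.comp_def]
      using congrFun (iterDeriv_mul_sub_mul_iterDeriv Z hAdd hLeib f g l) (t, x)
  have hterm : ∀ q ∈ nonemptySplits l, eLpNorm (term q) 2 (volume.restrict Ω) ≤
      commutatorBound Z Ω l.length f g t := fun q hq =>
    let ⟨hne, hlen⟩ := fst_ne_nil_and_length_add_length_of_mem_nonemptySplits hq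
    eLpNorm_iterDeriv_mul_iterDeriv_le_commutatorBound Z Ω hMeas hf hg ht hne hlen
  rw [hcomm, ← length_nonemptySplits, ← nsmul_eq_mul]
  calc _ ≤ (((nonemptySplits l).map term).map fun u => eLpNorm u 2 (volume.restrict Ω)).sum := by
        refine eLpNorm_list_sum_le one_le_two _ (List.forall_mem_map.2 fun q _ => ?_)
        exact (((measurable_iterDeriv hMeas q.1 hf).comp measurable_prodMk_left).mul
          ((measurable_iterDeriv hMeas q.2 hg).comp measurable_prodMk_left)).aestronglyMeasurable
    _ ≤ _ := by
        refine (List.sum_le_card_nsmul _ _ ?_).trans_eq (by rw [List.length_map, List.length_map])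
        exact List.forall_mem_map.2 (List.forall_mem_map.2 hterm)

end Conormal

theorem stmt12_general {M : ℕ} (Ω : Set (Fin 3 → ℝ))
    (Z : Fin M → ((ℝ × (Fin 3 → ℝ)) → ℝ) → ((ℝ × (Fin 3 → ℝ)) → ℝ))
    (hAdd : ∀ k f g, Z k (fun p => f p + g p) = fun p => Z k f p + Z k g p)
    (hLeib : ∀ k f g, Z k (fun p => f p * g p) = fun p => f p * Z k g p + g p * Z k f p)
    (hMeas : ∀ k f, Measurable f → Measurable (Z k f))
    (k : ℕ) :
    ∃ C : ℝ, 0 < C ∧ ∀ (f g : (ℝ × (Fin 3 → ℝ)) → ℝ),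
      Measurable f → Measurable g → ∀ t : ℝ, 0 ≤ t → ∀ w : Fin k → Fin M,
        eLpNorm (fun x : Fin 3 → ℝ =>
            Zw Z w (fun p => f p * g p) (t, x) - f (t, x) * Zw Z w g (t, x)) 2
            (volume.restrict Ω)
          ≤ ENNReal.ofReal C *
              ((∑ j : Fin M, HN Z Ω (k - 1) (Z j f) t) * AN Z Ω (k / 2 - 1) g t
                + HN Z Ω (k - 1) g t * (∑ j : Fin M, AN Z Ω ((k - 1) / 2) (Z j f) t)) := by
  refine ⟨2 ^ k, by positivity, fun f g hf hg t ht w => ?_⟩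
  have h := eLpNorm_commutator_le Z Ω hAdd hLeib hMeas hf hg ht (List.ofFn w)
  rw [List.length_ofFn] at h
  refine h.trans (mul_le_mul_left ?_ _)
  rw [ENNReal.ofReal_pow zero_le_two, ENNReal.ofReal_ofNat]
  exact_mod_cast Nat.sub_le _ _

/-- Commutator estimate: for `|I| = k ≥ 2`,
`‖[Z^I, f] g(t)‖_{L²(Ω)} ≲ ‖Zf(t)‖_{H^{k−1}_co} |||g|||_{⌊k/2⌋−1,∞,t}
  + ‖g(t)‖_{H^{k−1}_co} |||Zf|||_{⌊(k−1)/2⌋,∞,t}`,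
where `[Z^I, f] g = Z^I(fg) − f Z^I g` and `‖Zf‖` sums over the first derivatives `Z_j f`. -/
theorem stmt12 {M : ℕ} (Ω : Set (Fin 3 → ℝ))
    (Z : Fin M → ((ℝ × (Fin 3 → ℝ)) → ℝ) → ((ℝ × (Fin 3 → ℝ)) → ℝ))
    (hAdd : ∀ k f g, Z k (fun p => f p + g p) = fun p => Z k f p + Z k g p)
    (hLeib : ∀ k f g, Z k (fun p => f p * g p) = fun p => f p * Z k g p + g p * Z k f p)
    (hMeas : ∀ k f, Measurable f → Measurable (Z k f))
    (k : ℕ) (hk : 2 ≤ k) :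
    ∃ C : ℝ, 0 < C ∧ ∀ (f g : (ℝ × (Fin 3 → ℝ)) → ℝ),
      Measurable f → Measurable g → ∀ t : ℝ, 0 ≤ t → ∀ w : Fin k → Fin M,
        eLpNorm (fun x : Fin 3 → ℝ =>
            Zw Z w (fun p => f p * g p) (t, x) - f (t, x) * Zw Z w g (t, x)) 2
            (volume.restrict Ω)
          ≤ ENNReal.ofReal C *
              ((∑ j : Fin M, HN Z Ω (k - 1) (Z j f) t) * AN Z Ω (k / 2 - 1) g t
                + HN Z Ω (k - 1) g t * (∑ j : Fin M, AN Z Ω ((k - 1) / 2) (Z j f) t)) :=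
  stmt12_general Ω Z hAdd hLeib hMeas k
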